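/- arXiv:math/0601457 — 5 statements merged into one kernel-verified Lean document; each statement's English description precedes it below -/
import Mathlib

section
/- For any x > 0 and y > 0, the quantity φ(x,y) = E|exp(−x²y²/8 + (xy/4)ξ) − 1|, where ξ is a standard normal random variable, satisfies 0 < φ(x,y) < 1; moreover φ(x,y)² ≤ e^{−x²y²/8} − 2e^{−3x²y²/32} + 1. -/
/-!
Write `Z = exp (a + t ξ)` with `t = xy/4` and `a = -2t²`. The Gaussian moment generating
function gives `E Z = exp (-3t²/2) < 1` and `E Z² = exp (-2t²)`, so
`φ = E|Z - 1| ≥ |E Z - 1| > 0`, while Cauchy–Schwarz (Jensen) gives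
`φ² ≤ E (Z - 1)² = E Z² - 2 E Z + 1`, which is `< 1` because `exp (-2t²) < 2 exp (-3t²/2)`.
-/

open MeasureTheory ProbabilityTheory Real
open scoped NNReal

lemma sq_integral_le_integral_sq {Ω : Type*} [MeasurableSpace Ω] {μ : Measure Ω}
    [IsProbabilityMeasure μ] {f : Ω → ℝ} (hf : MemLp f 2 μ) :
    (∫ ω, f ω ∂μ) ^ 2 ≤ ∫ ω, f ω ^ 2 ∂μ := by
  have h := variance_nonneg f μ
  rw [variance_eq_sub hf] at h
  simpa only [Pi.pow_apply, sub_nonneg] using h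

section Gaussian

variable {m : ℝ} {v : ℝ≥0}

lemma integral_exp_add_mul_gaussianReal (a t : ℝ) :
    ∫ ξ, exp (a + t * ξ) ∂gaussianReal m v = exp (a + m * t + v * t ^ 2 / 2) := by
  have hmgf := congrFun (mgf_fun_id_gaussianReal (μ := m) (v := v)) t
  simp_rw [exp_add a, integral_const_mul]
  rw [mgf] at hmgf
  rw [hmgf, ← exp_add, add_assoc]

lemma memLp_exp_add_mul_gaussianReal (a t : ℝ) :
    MemLp (fun ξ ↦ exp (a + t * ξ)) 2 (gaussianReal m v) := by
  refine (memLp_two_iff_integrable_sq (by fun_prop)).2 ?_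
  simp_rw [← exp_nat_mul, Nat.cast_ofNat, mul_add, ← mul_assoc, exp_add]
  exact (integrable_exp_mul_gaussianReal _).const_mul _

lemma integral_exp_add_mul_sub_one_gaussianReal (a t : ℝ) :
    ∫ ξ, (exp (a + t * ξ) - 1) ∂gaussianReal m v = exp (a + m * t + v * t ^ 2 / 2) - 1 := by
  rw [integral_sub ((memLp_exp_add_mul_gaussianReal a t).integrable one_le_two)
    (integrable_const 1), integral_exp_add_mul_gaussianReal]
  simp

lemma integral_sq_exp_add_mul_sub_one_gaussianReal (a t : ℝ) :
    ∫ ξ, (exp (a + t * ξ) - 1) ^ 2 ∂gaussianReal m v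
      = exp (2 * a + 2 * m * t + 2 * v * t ^ 2) - 2 * exp (a + m * t + v * t ^ 2 / 2) + 1 := by
  have hsq (ξ : ℝ) : (exp (a + t * ξ) - 1) ^ 2
      = exp (2 * a + 2 * t * ξ) - 2 * exp (a + t * ξ) + 1 := by
    rw [sub_sq, ← exp_nat_mul]
    ring_nf
  have hint (s r : ℝ) : Integrable (fun ξ ↦ exp (s + r * ξ)) (gaussianReal m v) :=
    (memLp_exp_add_mul_gaussianReal s r).integrable one_le_two
  have hdiff : Integrable (fun ξ ↦ exp (2 * a + 2 * t * ξ) - 2 * exp (a + t * ξ))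
      (gaussianReal m v) := (hint _ _).sub ((hint a t).const_mul 2)
  simp_rw [hsq]
  rw [integral_add hdiff (integrable_const 1),
    integral_sub (hint _ _) ((hint a t).const_mul 2), integral_const_mul,
    integral_exp_add_mul_gaussianReal, integral_exp_add_mul_gaussianReal]
  simp only [integral_const, probReal_univ, smul_eq_mul, one_mul]
  ring_nf

lemma integral_abs_exp_add_mul_sub_one_gaussianReal_pos {a t : ℝ}
    (h : a + m * t + v * t ^ 2 / 2 ≠ 0) :
    0 < ∫ ξ, |exp (a + t * ξ) - 1| ∂gaussianReal m v :=
  calc 0 < |exp (a + m * t + v * t ^ 2 / 2) - 1| :=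
        abs_pos.2 (sub_ne_zero.2 (mt (exp_eq_one_iff _).1 h))
    _ = |∫ ξ, (exp (a + t * ξ) - 1) ∂gaussianReal m v| := by
        rw [integral_exp_add_mul_sub_one_gaussianReal]
    _ ≤ ∫ ξ, |exp (a + t * ξ) - 1| ∂gaussianReal m v := abs_integral_le_integral_abs

lemma sq_integral_abs_exp_add_mul_sub_one_gaussianReal_le (a t : ℝ) :
    (∫ ξ, |exp (a + t * ξ) - 1| ∂gaussianReal m v) ^ 2
      ≤ exp (2 * a + 2 * m * t + 2 * v * t ^ 2) - 2 * exp (a + m * t + v * t ^ 2 / 2) + 1 := by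
  have hf : MemLp (fun ξ ↦ |exp (a + t * ξ) - 1|) 2 (gaussianReal m v) :=
    ((memLp_exp_add_mul_gaussianReal a t).sub (memLp_const 1)).abs
  rw [← integral_sq_exp_add_mul_sub_one_gaussianReal]
  simpa only [sq_abs] using sq_integral_le_integral_sq hf

end Gaussian

/-- For any `x > 0` and `y > 0`, the quantity `φ(x,y) = E|exp(−x²y²/8 + (xy/4)ξ) − 1|`,
where `ξ` is a standard normal random variable, satisfies `0 < φ(x,y) < 1`; moreover
`φ(x,y)² ≤ e^{−x²y²/8} − 2e^{−3x²y²/32} + 1`. -/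
theorem phi_mem_Ioo_and_sq_le (x y : ℝ) (hx : 0 < x) (hy : 0 < y) :
    (0 : ℝ) < (∫ ξ, |Real.exp (-(x ^ 2 * y ^ 2) / 8 + x * y / 4 * ξ) - 1| ∂gaussianReal 0 1) ∧
    (∫ ξ, |Real.exp (-(x ^ 2 * y ^ 2) / 8 + x * y / 4 * ξ) - 1| ∂gaussianReal 0 1) < 1 ∧
    (∫ ξ, |Real.exp (-(x ^ 2 * y ^ 2) / 8 + x * y / 4 * ξ) - 1| ∂gaussianReal 0 1) ^ 2 ≤
      Real.exp (-(x ^ 2 * y ^ 2) / 8) - 2 * Real.exp (-(3 * x ^ 2 * y ^ 2) / 32) + 1 := by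
  have hxy : 0 < x ^ 2 * y ^ 2 := by positivity
  have hmean : -(x ^ 2 * y ^ 2) / 8 + 0 * (x * y / 4) + ((1 : ℝ≥0) : ℝ) * (x * y / 4) ^ 2 / 2
      = -(3 * x ^ 2 * y ^ 2) / 32 := by push_cast; ring
  have hsecond : 2 * (-(x ^ 2 * y ^ 2) / 8) + 2 * 0 * (x * y / 4)
      + 2 * ((1 : ℝ≥0) : ℝ) * (x * y / 4) ^ 2 = -(x ^ 2 * y ^ 2) / 8 := by push_cast; ring
  have hpos := integral_abs_exp_add_mul_sub_one_gaussianReal_pos (m := 0) (v := 1)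
    (a := -(x ^ 2 * y ^ 2) / 8) (t := x * y / 4) (by rw [hmean]; linarith)
  have hsq := sq_integral_abs_exp_add_mul_sub_one_gaussianReal_le (m := 0) (v := 1)
    (-(x ^ 2 * y ^ 2) / 8) (x * y / 4)
  rw [hmean, hsecond] at hsq
  have hdecay : exp (-(x ^ 2 * y ^ 2) / 8) ≤ exp (-(3 * x ^ 2 * y ^ 2) / 32) :=
    exp_le_exp.2 (by linarith)
  refine ⟨hpos, ?_, hsq⟩
  nlinarith [exp_pos (-(3 * x ^ 2 * y ^ 2) / 32)]
end

section
/- Let Γ(x) denote the standard Gamma function. Then for all integers n ≥ 1: 1 − 1/(6n) < Γ(n + 1/2)/(√n · Γ(n)) < 1. -/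
/-!
Put `f(x) = Γ(x + 1/2)² / (x Γ(x)²)`. Log-convexity of `Γ`, applied at the midpoints of
`[x, x + 1]` and `[x + 1/2, x + 3/2]`, gives `x / (x + 1/2) ≤ f(x) ≤ 1`, so `f(x) → 1`.
The functional equation gives `f(x + 1) = f(x) (x + 1/2)² / (x (x + 1))`, so `f` strictly
increases along unit steps, whence `f < 1`, while `f(x) / (1 - 1/(4x))` strictly decreases
along unit steps, whence `f(x) > 1 - 1/(4x) > (1 - 1/(6x))²`.
-/
open Real Filter Topology

lemma Gamma_midpoint_sq_le {s t : ℝ} (hs : 0 < s) (ht : 0 < t) :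
    Gamma ((s + t) / 2) ^ 2 ≤ Gamma s * Gamma t := by
  have h := Gamma_mul_add_mul_le_rpow_Gamma_mul_rpow_Gamma hs ht (a := 1 / 2) (b := 1 / 2)
    one_half_pos one_half_pos (add_halves 1)
  rw [← sqrt_eq_rpow, ← sqrt_eq_rpow, ← sqrt_mul (Gamma_pos_of_pos hs).le,
    show 1 / 2 * s + 1 / 2 * t = (s + t) / 2 by ring] at h
  calc Gamma ((s + t) / 2) ^ 2 ≤ √(Gamma s * Gamma t) ^ 2 :=
        pow_le_pow_left₀ (Gamma_pos_of_pos (by positivity)).le h 2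
    _ = Gamma s * Gamma t :=
        sq_sqrt (mul_pos (Gamma_pos_of_pos hs) (Gamma_pos_of_pos ht)).le

lemma tendsto_one_sub_one_div_atTop {g : ℝ → ℝ} (hg : Tendsto g atTop atTop) :
    Tendsto (fun x => 1 - 1 / g x) atTop (𝓝 1) := by
  simpa using tendsto_const_nhds.sub (tendsto_const_nhds (x := (1 : ℝ)).div_atTop hg)

lemma lt_of_add_one_lt_of_tendsto {u : ℝ → ℝ} {a l x : ℝ}
    (hstep : ∀ y, a < y → u (y + 1) < u y) (hu : Tendsto u atTop (𝓝 l)) (hx : a < x) :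
    l < u x := by
  have hanti : Antitone fun k : ℕ => u (x + 1 + k) := by
    refine antitone_nat_of_succ_le fun k => le_of_lt ?_
    rw [Nat.cast_succ, ← add_assoc]
    exact hstep _ (by linarith [k.cast_nonneg (α := ℝ)])
  have hlim : Tendsto (fun k : ℕ => u (x + 1 + k)) atTop (𝓝 l) :=
    hu.comp (tendsto_atTop_add_const_left _ _ tendsto_natCast_atTop_atTop)
  calc l ≤ u (x + 1) := by simpa using hanti.le_of_tendsto hlim 0
    _ < u x := hstep x hx

noncomputable def gammaHalfRatioSq (x : ℝ) : ℝ := Gamma (x + 1 / 2) ^ 2 / (x * Gamma x ^ 2)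

namespace gammaHalfRatioSq

variable {x : ℝ}

lemma pos (hx : 0 < x) : 0 < gammaHalfRatioSq x := by
  have := Gamma_pos_of_pos hx
  have := Gamma_pos_of_pos (show 0 < x + 1 / 2 by positivity)
  unfold gammaHalfRatioSq
  positivity

lemma add_one (hx : 0 < x) :
    gammaHalfRatioSq (x + 1) = gammaHalfRatioSq x * (x + 1 / 2) ^ 2 / (x * (x + 1)) := by
  have hΓ := (Gamma_pos_of_pos hx).ne'
  unfold gammaHalfRatioSq
  rw [add_right_comm, Gamma_add_one (by positivity), Gamma_add_one hx.ne']
  field_simp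

lemma eq_div_sq (hx : 0 ≤ x) :
    gammaHalfRatioSq x = (Gamma (x + 1 / 2) / (√x * Gamma x)) ^ 2 := by
  rw [gammaHalfRatioSq, div_pow, mul_pow, sq_sqrt hx]

lemma le_one (hx : 0 < x) : gammaHalfRatioSq x ≤ 1 := by
  have h := Gamma_midpoint_sq_le hx (show 0 < x + 1 by positivity)
  rw [Gamma_add_one hx.ne', show (x + (x + 1)) / 2 = x + 1 / 2 by ring] at h
  have := Gamma_pos_of_pos hx
  unfold gammaHalfRatioSq
  rw [div_le_one (by positivity)]
  linarith

lemma one_sub_one_div_le (hx : 0 < x) : 1 - 1 / (2 * x + 1) ≤ gammaHalfRatioSq x := by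
  have h := Gamma_midpoint_sq_le (show 0 < x + 1 / 2 by positivity)
    (show 0 < x + 1 / 2 + 1 by positivity)
  rw [Gamma_add_one (by positivity), show (x + 1 / 2 + (x + 1 / 2 + 1)) / 2 = x + 1 by ring,
    Gamma_add_one hx.ne'] at h
  have := Gamma_pos_of_pos hx
  unfold gammaHalfRatioSq
  rw [show 1 - 1 / (2 * x + 1) = x / (x + 1 / 2) by field_simp; ring,
    div_le_div_iff₀ (by positivity) (by positivity)]
  linarith

lemma tendsto_atTop : Tendsto gammaHalfRatioSq atTop (𝓝 1) :=
  tendsto_of_tendsto_of_tendsto_of_le_of_le'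
    (tendsto_one_sub_one_div_atTop
      ((tendsto_id.const_mul_atTop two_pos).atTop_add tendsto_const_nhds))
    tendsto_const_nhds
    (eventually_gt_atTop 0 |>.mono fun _ => one_sub_one_div_le)
    (eventually_gt_atTop 0 |>.mono fun _ => le_one)

lemma lt_one (hx : 0 < x) : gammaHalfRatioSq x < 1 := by
  refine lt_of_lt_of_le ?_ (le_one (x := x + 1) (by positivity))
  rw [add_one hx, lt_div_iff₀ (by positivity)]
  nlinarith [pos hx]

lemma one_sub_one_div_lt (hx : 1 / 4 < x) : 1 - 1 / (4 * x) < gammaHalfRatioSq x := by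
  have hc : ∀ {y : ℝ}, 1 / 4 < y → 0 < 1 - 1 / (4 * y) := fun hy => by
    rw [sub_pos, div_lt_one (by linarith)]
    linarith
  have hstep : ∀ y, 1 / 4 < y →
      gammaHalfRatioSq (y + 1) / (1 - 1 / (4 * (y + 1))) <
        gammaHalfRatioSq y / (1 - 1 / (4 * y)) := fun y hy => by
    have hy0 : 0 < y := by linarith
    have key : (y + 1 / 2) ^ 2 / (y * (y + 1)) * (1 - 1 / (4 * y)) < 1 - 1 / (4 * (y + 1)) := by
      field_simp
      nlinarith
    rw [div_lt_div_iff₀ (hc (by linarith)) (hc hy), add_one hy0, mul_div_assoc, mul_assoc]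
    exact mul_lt_mul_of_pos_left key (pos hy0)
  have hlim : Tendsto (fun y => gammaHalfRatioSq y / (1 - 1 / (4 * y))) atTop (𝓝 1) := by
    have h := tendsto_atTop.div
      (tendsto_one_sub_one_div_atTop (tendsto_id.const_mul_atTop four_pos)) one_ne_zero
    rw [div_one] at h
    exact h
  have h := lt_of_add_one_lt_of_tendsto hstep hlim hx
  rwa [one_lt_div (hc hx)] at h

end gammaHalfRatioSq

/-- **(i) of Lemma 2.1 (Jiang).**  For all integers `n ≥ 1`,
`1 − 1/(6n) < Γ(n + 1/2)/(√n · Γ(n)) < 1`, where `Γ` is the standard Gamma function. -/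
theorem gamma_ratio_bounds (n : ℕ) (hn : 1 ≤ n) :
    1 - 1 / (6 * (n : ℝ)) < Real.Gamma ((n : ℝ) + 1 / 2) / (Real.sqrt n * Real.Gamma n) ∧
    Real.Gamma ((n : ℝ) + 1 / 2) / (Real.sqrt n * Real.Gamma n) < 1 := by
  have hx : (1 : ℝ) ≤ n := by exact_mod_cast hn
  have ha := gammaHalfRatioSq.eq_div_sq (x := n) (by positivity)
  have ha0 : 0 ≤ Real.Gamma ((n : ℝ) + 1 / 2) / (Real.sqrt n * Real.Gamma n) := by positivity
  have hsq : (1 - 1 / (6 * (n : ℝ))) ^ 2 < 1 - 1 / (4 * n) := by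
    field_simp
    nlinarith
  constructor
  · refine lt_of_pow_lt_pow_left₀ 2 ha0 (hsq.trans ?_)
    exact ha ▸ gammaHalfRatioSq.one_sub_one_div_lt (by linarith)
  · refine lt_of_pow_lt_pow_left₀ 2 zero_le_one ?_
    rw [one_pow, ← ha]
    exact gammaHalfRatioSq.lt_one (by linarith)
end

section
/- Let Γ(x) denote the standard Gamma function. Then for all integers n ≥ 1: |Γ((n+1)/2)/(√(n/2) · Γ(n/2)) − 1| < 3/(5n). -/
lemma gamma_mid_sq_le {x y : ℝ} (hx : 0 < x) (hy : 0 < y) :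
    Real.Gamma ((x + y) / 2) ^ 2 ≤ Real.Gamma x * Real.Gamma y := by
  have h := Real.convexOn_log_Gamma.2 (Set.mem_Ioi.2 hx) (Set.mem_Ioi.2 hy)
      (by norm_num : (0:ℝ) ≤ 1/2) (by norm_num : (0:ℝ) ≤ 1/2) (by norm_num)
  have hgx := Real.Gamma_pos_of_pos hx
  have hgy := Real.Gamma_pos_of_pos hy
  have hm : (0:ℝ) < (x + y) / 2 := by linarith
  have hgm := Real.Gamma_pos_of_pos hm
  simp only [Function.comp, smul_eq_mul] at h
  have hxy : (1:ℝ)/2 * x + 1/2 * y = (x + y) / 2 := by ring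
  rw [hxy] at h
  have h2 : Real.log (Real.Gamma ((x+y)/2) ^ 2) ≤ Real.log (Real.Gamma x * Real.Gamma y) := by
    rw [Real.log_pow, Real.log_mul (ne_of_gt hgx) (ne_of_gt hgy)]
    push_cast
    linarith [h]
  exact (Real.log_le_log_iff (by positivity) (by positivity)).mp h2

set_option maxHeartbeats 1000000 in
/-- **(ii) of Lemma 2.1 (Jiang).**  For all integers `n ≥ 1`,
`|Γ((n+1)/2)/(√(n/2) · Γ(n/2)) − 1| < 3/(5n)`, where `Γ` is the standard Gamma function. -/
theorem gamma_ratio_half_bound (n : ℕ) (hn : 1 ≤ n) :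
    |Real.Gamma (((n : ℝ) + 1) / 2) / (Real.sqrt ((n : ℝ) / 2) * Real.Gamma ((n : ℝ) / 2)) - 1|
      < 3 / (5 * (n : ℝ)) := by
  have hn1 : (1:ℝ) ≤ (n:ℝ) := by exact_mod_cast hn
  set x : ℝ := (n:ℝ) / 2 with hxdef
  have hx : 0 < x := by rw [hxdef]; linarith
  have hx12 : (0:ℝ) < x + 1/2 := by linarith
  have hgx := Real.Gamma_pos_of_pos hx
  have hgm := Real.Gamma_pos_of_pos hx12
  -- upper bound: Γ(x+1/2) ≤ √x · Γ(x)
  have key1 : Real.Gamma (x + 1/2) ^ 2 ≤ x * Real.Gamma x ^ 2 := by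
    have h := gamma_mid_sq_le hx (show (0:ℝ) < x + 1 by linarith)
    have e1 : (x + (x + 1)) / 2 = x + 1/2 := by ring
    rw [e1, Real.Gamma_add_one hx.ne'] at h
    nlinarith [h]
  -- lower bound: x·Γ(x) ≤ √(x+1/2) · Γ(x+1/2)
  have key2 : (x * Real.Gamma x) ^ 2 ≤ (x + 1/2) * Real.Gamma (x + 1/2) ^ 2 := by
    have h := gamma_mid_sq_le hx12 (show (0:ℝ) < x + 3/2 by linarith)
    have e1 : (x + 1/2 + (x + 3/2)) / 2 = x + 1 := by ring
    have e2 : x + 3/2 = (x + 1/2) + 1 := by ring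
    rw [e1, e2, Real.Gamma_add_one hx12.ne'] at h
    rw [Real.Gamma_add_one hx.ne'] at h
    nlinarith [h]
  set s : ℝ := Real.sqrt x with hsdef
  set t : ℝ := Real.sqrt (x + 1/2) with htdef
  have hs0 : 0 < s := Real.sqrt_pos.mpr hx
  have ht0 : 0 < t := Real.sqrt_pos.mpr hx12
  have hs2 : s ^ 2 = x := Real.sq_sqrt hx.le
  have ht2 : t ^ 2 = x + 1/2 := Real.sq_sqrt hx12.le
  have hst : s ≤ t := Real.sqrt_le_sqrt (by linarith)
  have hup : Real.Gamma (x + 1/2) ≤ s * Real.Gamma x := by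
    nlinarith [key1, hgm, hgx, mul_pos hs0 hgx]
  have hlow : x * Real.Gamma x ≤ t * Real.Gamma (x + 1/2) := by
    nlinarith [key2, hgm, hgx, mul_pos ht0 hgm, mul_pos hx hgx]
  -- rewrite goal
  have egoal : ((n:ℝ) + 1) / 2 = x + 1/2 := by rw [hxdef]; ring
  rw [egoal]
  set R : ℝ := Real.Gamma (x + 1/2) / (s * Real.Gamma x) with hRdef
  have hden : 0 < s * Real.Gamma x := mul_pos hs0 hgx
  have hR1 : R ≤ 1 := (div_le_one hden).mpr hup
  have hRlow : s / t ≤ R := by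
    rw [hRdef, div_le_div_iff₀ ht0 hden]
    calc s * (s * Real.Gamma x) = s ^ 2 * Real.Gamma x := by ring
      _ = x * Real.Gamma x := by rw [hs2]
      _ ≤ t * Real.Gamma (x + 1/2) := hlow
      _ = Real.Gamma (x + 1/2) * t := by ring
  have hrhs : 3 / (5 * (n:ℝ)) = 3 / (10 * x) := by rw [hxdef]; ring_nf
  rw [abs_of_nonpos (by linarith : R - 1 ≤ 0), hrhs]
  have hkey : (t - s) * (10 * s ^ 2) < 3 * t := by
    have h1 : (t - s) * (t + s) = 1/2 := by
      rw [show (t - s) * (t + s) = t ^ 2 - s ^ 2 from by ring, hs2, ht2]; ring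
    have hts : 0 < t + s := by linarith
    have hss : s * s ≤ t * s := mul_le_mul_of_nonneg_right hst hs0.le
    have h2 : 5 * s ^ 2 < 3 * t * (t + s) := by nlinarith [ht2, hss]
    have h3 : (t - s) * (10 * s ^ 2) * (t + s) = 5 * s ^ 2 := by
      calc (t - s) * (10 * s ^ 2) * (t + s) = ((t - s) * (t + s)) * (10 * s ^ 2) := by ring
        _ = 1/2 * (10 * s ^ 2) := by rw [h1]
        _ = 5 * s ^ 2 := by ring
    have h4 : (t - s) * (10 * s ^ 2) * (t + s) < 3 * t * (t + s) := by rw [h3]; exact h2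
    exact lt_of_mul_lt_mul_right (by linarith [h4]) hts.le
  have hfin : 1 - s / t < 3 / (10 * x) := by
    rw [← hs2]
    have : 1 - s / t = (t - s) / t := by field_simp
    rw [this, div_lt_div_iff₀ ht0 (by positivity)]
    linarith [hkey]
  linarith [hRlow]
end

section
/- Let ε ∈ (0,1) and let {p_n} and {q_n} be sequences of positive integers with ε ≤ p_n/q_n ≤ ε^{−1} for all n and p_n → ∞. For each n, let X_n be a p_n × q_n random matrix with i.i.d. standard normal entries. Then Cov(tr(X_nᵀX_n), tr((X_nᵀX_n)²)) ~ 4 p_n q_n (p_n + q_n) as n → ∞. -/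
/-!
Gaussian integration by parts, `E[x_a f(x)] = E[∂_a f(x)]` for a standard Gaussian vector
`x ∈ ℝᴺ` and a polynomial `f`, applied to `x_a f` and summed over `a`, gives
`E[‖x‖² f(x)] = (N + d) E[f(x)]` when `f` is homogeneous of degree `d` (Euler's identity
`Σ_a x_a ∂_a f = d f`); hence `Cov(‖x‖², f(x)) = d E[f(x)]`. Taking for `x` the entries of `X`
and `f = tr((XᵀX)²)`, we have `‖x‖² = tr(XᵀX)`, `d = 4`, and Isserlis' theorem gives
`E[f(X)] = pq(p + q + 1)`. So the covariance is exactly `4pq(p + q + 1)`, and the ratio is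
`1 + 1/(p + q)`.
-/

open MeasureTheory ProbabilityTheory Filter Matrix

/-- The covariance `Cov(f,g) = E[(f − E f)(g − E g)]` of two real random variables with
respect to the measure `μ`. -/
noncomputable def rvCov {Ω : Type*} [MeasurableSpace Ω] (f g : Ω → ℝ) (μ : Measure Ω) : ℝ :=
  ∫ ω, (f ω - ∫ ω', f ω' ∂μ) * (g ω - ∫ ω', g ω' ∂μ) ∂μ

open Real MvPolynomial
open scoped NNReal

lemma rvCov_eq_covariance {Ω : Type*} [MeasurableSpace Ω] (f g : Ω → ℝ) (μ : Measure Ω) :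
    rvCov f g μ = cov[f, g; μ] := rfl

lemma hasDerivAt_gaussianPDFReal_zero_one (x : ℝ) :
    HasDerivAt (gaussianPDFReal 0 1) (-(gaussianPDFReal 0 1 x * x)) x := by
  have h : HasDerivAt (fun x : ℝ => -x ^ 2 / 2) (-x) x :=
    ((hasDerivAt_pow 2 x).neg.div_const 2).congr_deriv (by ring)
  have hφ : gaussianPDFReal 0 1 = fun x => (√(2 * π))⁻¹ * rexp (-x ^ 2 / 2) := by
    ext x
    simp [gaussianPDFReal_def]
  rw [hφ]
  exact (h.exp.const_mul _).congr_deriv (by ring)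

lemma integrable_pow_gaussianReal (μ : ℝ) (v : ℝ≥0) (k : ℕ) :
    Integrable (fun x => x ^ k) (gaussianReal μ v) :=
  (memLp_id_gaussianReal k).integrable_norm_pow' |>.mono' (by fun_prop)
    (ae_of_all _ fun x => by simp)

lemma integrable_gaussianPDFReal_mul_pow (k : ℕ) :
    Integrable (fun x => gaussianPDFReal 0 1 x * x ^ k) := by
  have h := integrable_pow_gaussianReal 0 1 k
  rw [gaussianReal_of_var_ne_zero 0 one_ne_zero,
    integrable_withDensity_iff_integrable_smul' (measurable_gaussianPDF 0 1)
      (ae_of_all _ fun _ => ENNReal.ofReal_lt_top)] at h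
  refine h.congr (ae_of_all _ fun x => ?_)
  simp [gaussianPDF, ENNReal.toReal_ofReal (gaussianPDFReal_nonneg 0 1 x)]

-- `k - 1` truncates at `k = 0`, where both sides vanish.
lemma integral_pow_succ_gaussianReal (k : ℕ) :
    ∫ x, x ^ (k + 1) ∂gaussianReal 0 1 = k * ∫ x, x ^ (k - 1) ∂gaussianReal 0 1 := by
  rcases k with _ | k
  · simp [integral_id_gaussianReal]
  simp only [integral_gaussianReal_eq_integral_smul one_ne_zero, smul_eq_mul,
    add_tsub_cancel_right]
  have hderiv (x : ℝ) : HasDerivAt (fun x => gaussianPDFReal 0 1 x * x ^ (k + 1))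
      ((k + 1) * (gaussianPDFReal 0 1 x * x ^ k) - gaussianPDFReal 0 1 x * x ^ (k + 1 + 1)) x :=
    ((hasDerivAt_gaussianPDFReal_zero_one x).mul (hasDerivAt_pow (k + 1) x)).congr_deriv
      (by push_cast; ring)
  have hk := (integrable_gaussianPDFReal_mul_pow k).const_mul ((k : ℝ) + 1)
  have h := integral_eq_zero_of_hasDerivAt_of_integrable hderiv
    (hk.sub (integrable_gaussianPDFReal_mul_pow (k + 1 + 1)))
    (integrable_gaussianPDFReal_mul_pow (k + 1))
  rw [integral_sub hk (integrable_gaussianPDFReal_mul_pow (k + 1 + 1)), integral_const_mul] at h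
  push_cast
  linarith

notation "𝓖[" ι "]" => Measure.pi (fun _ : ι => gaussianReal 0 1)

lemma Finsupp.coe_tsub_single_one {ι : Type*} [DecidableEq ι] (u : ι →₀ ℕ) (a : ι) :
    ⇑(u - Finsupp.single a 1 : ι →₀ ℕ) = Function.update u a (u a - 1) := by
  ext i
  rcases eq_or_ne i a with rfl | h
  · simp
  · simp [h]

section GaussianVector

variable {ι : Type*} [Fintype ι]

lemma eval_monomial_eq_mul_prod_pow (x : ι → ℝ) (u : ι →₀ ℕ) (c : ℝ) :
    eval x (monomial u c) = c * ∏ i, x i ^ u i := by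
  rw [eval_monomial, Finsupp.prod_fintype _ _ fun _ => pow_zero _]

lemma integrable_eval_stdGaussian (p : MvPolynomial ι ℝ) :
    Integrable (fun x => eval x p) 𝓖[ι] := by
  induction p using MvPolynomial.induction_on' with
  | monomial u c =>
    simp_rw [eval_monomial_eq_mul_prod_pow]
    exact (Integrable.fintype_prod fun i => integrable_pow_gaussianReal 0 1 (u i)).const_mul c
  | add p q hp hq =>
    simp only [map_add]
    exact hp.add hq

lemma memLp_eval_stdGaussian (p : MvPolynomial ι ℝ) : MemLp (fun x => eval x p) 2 𝓖[ι] :=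
  (memLp_two_iff_integrable_sq p.continuous_eval.aestronglyMeasurable).2 <|
    (integrable_eval_stdGaussian (p ^ 2)).congr (ae_of_all _ fun x => map_pow (eval x) p 2)

lemma integral_prod_pow_stdGaussian (u : ι → ℕ) :
    ∫ x, ∏ i, x i ^ u i ∂𝓖[ι] = ∏ i, ∫ t, t ^ u i ∂gaussianReal 0 1 :=
  integral_fintype_prod_eq_prod fun i t => t ^ u i

lemma integral_mul_prod_pow_stdGaussian [DecidableEq ι] (a : ι) (u : ι → ℕ) :
    ∫ x, x a * ∏ i, x i ^ u i ∂𝓖[ι] =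
      u a * ∫ x, ∏ i, x i ^ Function.update u a (u a - 1) i ∂𝓖[ι] := by
  have hmul (x : ι → ℝ) :
      x a * ∏ i, x i ^ u i = ∏ i, x i ^ Function.update u a (u a + 1) i := by
    simp_rw [Function.apply_update (fun i n => x i ^ n),
      Finset.prod_update_of_mem (Finset.mem_univ a),
      ← Finset.mul_prod_erase _ _ (Finset.mem_univ a), Finset.sdiff_singleton_eq_erase, pow_succ]
    ring
  simp_rw [hmul, integral_prod_pow_stdGaussian,
    Function.apply_update (fun i n => ∫ t, t ^ n ∂gaussianReal 0 1),
    Finset.prod_update_of_mem (Finset.mem_univ a), integral_pow_succ_gaussianReal, mul_assoc]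

variable (ι) in
noncomputable def gaussianExpectation : MvPolynomial ι ℝ →ₗ[ℝ] ℝ where
  toFun p := ∫ x, eval x p ∂𝓖[ι]
  map_add' p q := by
    simp only [map_add]
    exact integral_add (integrable_eval_stdGaussian p) (integrable_eval_stdGaussian q)
  map_smul' c p := by
    simp only [smul_eval, RingHom.id_apply, smul_eq_mul]
    exact integral_const_mul c _

lemma gaussianExpectation_apply (p : MvPolynomial ι ℝ) :
    gaussianExpectation ι p = ∫ x, eval x p ∂𝓖[ι] := rfl

lemma gaussianExpectation_one : gaussianExpectation ι 1 = 1 := by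
  simp [gaussianExpectation_apply]

theorem gaussianExpectation_X_mul (a : ι) (p : MvPolynomial ι ℝ) :
    gaussianExpectation ι (X a * p) = gaussianExpectation ι (pderiv a p) := by
  classical
  induction p using MvPolynomial.induction_on' with
  | monomial u c =>
    simp_rw [gaussianExpectation_apply, pderiv_monomial, map_mul, eval_X,
      eval_monomial_eq_mul_prod_pow, Finsupp.coe_tsub_single_one, mul_left_comm _ c,
      integral_const_mul, integral_mul_prod_pow_stdGaussian]
    ring
  | add p q hp hq => simp only [mul_add, map_add, hp, hq]

lemma gaussianExpectation_X_mul_X [DecidableEq ι] (a b : ι) :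
    gaussianExpectation ι (X a * X b) = if a = b then 1 else 0 := by
  rw [gaussianExpectation_X_mul, pderiv_X, Pi.single_apply]
  by_cases h : a = b
  · simp [h, gaussianExpectation_one]
  · simp [h, Ne.symm h]

theorem gaussianExpectation_X_mul_X_mul_X_mul_X [DecidableEq ι] (a b c d : ι) :
    gaussianExpectation ι (X a * X b * X c * X d) =
      (if a = b then 1 else 0) * (if c = d then 1 else 0) +
      (if a = c then 1 else 0) * (if b = d then 1 else 0) +
      (if a = d then 1 else 0) * (if b = c then 1 else 0) := by
  rw [mul_assoc, mul_assoc, ← mul_assoc (X b), gaussianExpectation_X_mul]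
  simp only [pderiv_mul, pderiv_X, Pi.single_apply, add_mul, ite_mul, one_mul, zero_mul,
    map_add]
  rcases eq_or_ne a b with rfl | hb <;> rcases eq_or_ne a c with rfl | hc <;>
    rcases eq_or_ne a d with rfl | hd <;>
    simp [*, Ne.symm, gaussianExpectation_X_mul_X]

lemma sum_pderiv_X_mul_of_isHomogeneous {p : MvPolynomial ι ℝ} {n : ℕ}
    (hp : p.IsHomogeneous n) :
    ∑ a, pderiv a (X a * p) = (Fintype.card ι + n) • p := by
  simp only [pderiv_mul, pderiv_X_self, one_mul, Finset.sum_add_distrib, Finset.sum_const,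
    Finset.card_univ, hp.sum_X_mul_pderiv, add_smul]

lemma gaussianExpectation_sum_X_sq_mul {p : MvPolynomial ι ℝ} {n : ℕ}
    (hp : p.IsHomogeneous n) :
    gaussianExpectation ι ((∑ a, X a ^ 2) * p) =
      (Fintype.card ι + n) * gaussianExpectation ι p := by
  simp_rw [Finset.sum_mul, sq, mul_assoc, map_sum, gaussianExpectation_X_mul, ← map_sum,
    sum_pderiv_X_mul_of_isHomogeneous hp, map_nsmul, nsmul_eq_mul]
  push_cast
  ring

theorem covariance_sum_sq_eval_of_isHomogeneous {p : MvPolynomial ι ℝ} {n : ℕ}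
    (hp : p.IsHomogeneous n) :
    cov[fun x => ∑ i, x i ^ 2, fun x => eval x p; 𝓖[ι]] = n * ∫ x, eval x p ∂𝓖[ι] := by
  have hsq : (fun x : ι → ℝ => ∑ i, x i ^ 2) = fun x => eval x (∑ i, X i ^ 2) := by simp
  rw [hsq, covariance_eq_sub (memLp_eval_stdGaussian _) (memLp_eval_stdGaussian p)]
  have h_one := gaussianExpectation_sum_X_sq_mul (isHomogeneous_one ι ℝ)
  simp only [mul_one, gaussianExpectation_one, CharP.cast_eq_zero, add_zero] at h_one
  have h_p := gaussianExpectation_sum_X_sq_mul hp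
  simp only [gaussianExpectation_apply, map_mul] at h_one h_p
  simp only [Pi.mul_apply, h_one, h_p]
  ring

end GaussianVector

section GenericMatrix

variable (m n : Type*) [Fintype m] [Fintype n]

noncomputable def traceGramSq : MvPolynomial (m × n) ℝ :=
  ∑ j, ∑ k, (∑ i, X (i, j) * X (i, k)) * ∑ i', X (i', k) * X (i', j)

lemma isHomogeneous_traceGramSq : (traceGramSq m n).IsHomogeneous 4 := by
  have hgram (j k : n) :
      (∑ i : m, X (i, j) * X (i, k) : MvPolynomial (m × n) ℝ).IsHomogeneous 2 :=
    IsHomogeneous.sum _ _ _ fun _ _ => (isHomogeneous_X _ _).mul (isHomogeneous_X _ _)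
  exact IsHomogeneous.sum _ _ _ fun j _ => IsHomogeneous.sum _ _ _ fun k _ =>
    (hgram j k).mul (hgram k j)

variable {m n}

lemma trace_transpose_mul_self_of_curry (y : m × n → ℝ) :
    trace ((of (Function.curry y))ᵀ * of (Function.curry y)) = ∑ a, y a ^ 2 := by
  simp [trace, mul_apply, Fintype.sum_prod_type, sq, Finset.sum_comm (γ := n)]

lemma trace_transpose_mul_self_sq_of_curry [DecidableEq n] (y : m × n → ℝ) :
    trace (((of (Function.curry y))ᵀ * of (Function.curry y)) ^ 2) =
      eval y (traceGramSq m n) := by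
  simp [traceGramSq, trace, sq, mul_apply, Finset.sum_mul_sum]

variable [DecidableEq m] [DecidableEq n]

lemma gaussianExpectation_traceGramSq :
    gaussianExpectation (m × n) (traceGramSq m n) =
      Fintype.card m * Fintype.card n * (Fintype.card m + Fintype.card n + 1) := by
  simp only [traceGramSq, Finset.sum_mul_sum, ← mul_assoc, map_sum,
    gaussianExpectation_X_mul_X_mul_X_mul_X, Prod.mk.injEq]
  simp [ite_and, Finset.sum_add_distrib]
  ring

lemma covariance_sum_sq_traceGramSq :
    cov[fun y => ∑ a, y a ^ 2, fun y => eval y (traceGramSq m n); 𝓖[m × n]] =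
      4 * Fintype.card m * Fintype.card n * (Fintype.card m + Fintype.card n + 1) := by
  rw [covariance_sum_sq_eval_of_isHomogeneous (isHomogeneous_traceGramSq m n),
    ← gaussianExpectation_apply, gaussianExpectation_traceGramSq]
  push_cast
  ring

end GenericMatrix

lemma map_uncurry_pi_pi {m n α : Type*} [Fintype m] [Fintype n] [MeasurableSpace α]
    (ν : Measure α) [IsProbabilityMeasure ν] :
    (Measure.pi fun _ : m => Measure.pi fun _ : n => ν).map Function.uncurry =
      Measure.pi fun _ : m × n => ν := by
  simpa only [Measure.infinitePi_eq_pi, MeasurableEquiv.coe_curry_symm] using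
    Measure.infinitePi_map_curry_symm fun (_ : m) (_ : n) => ν

theorem covariance_trace_transpose_mul_self_of_map_eq_gaussian
    {Ω m n : Type*} [MeasurableSpace Ω] [Fintype m] [Fintype n] [DecidableEq m] [DecidableEq n]
    {μ : Measure Ω} {A : Ω → m → n → ℝ}
    (hA : μ.map A = Measure.pi fun _ => Measure.pi fun _ => gaussianReal 0 1) :
    cov[fun ω => trace ((of (A ω))ᵀ * of (A ω)),
        fun ω => trace (((of (A ω))ᵀ * of (A ω)) ^ 2); μ] =
      4 * Fintype.card m * Fintype.card n * (Fintype.card m + Fintype.card n + 1) := by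
  have hA_meas : AEMeasurable A μ :=
    .of_map_ne_zero (by rw [hA]; exact IsProbabilityMeasure.ne_zero _)
  have hmap : μ.map (Function.uncurry ∘ A) = 𝓖[m × n] := by
    have h_uncurry : Measurable (Function.uncurry : (m → n → ℝ) → m × n → ℝ) :=
      (MeasurableEquiv.curry m n ℝ).symm.measurable
    rw [← AEMeasurable.map_map_of_aemeasurable h_uncurry.aemeasurable hA_meas, hA,
      map_uncurry_pi_pi]
  have h := covariance_map_fun (μ := μ) (Z := Function.uncurry ∘ A)
    (X := fun y => ∑ a, y a ^ 2) (Y := fun y => eval y (traceGramSq m n))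
    (Continuous.aestronglyMeasurable (by fun_prop))
    (traceGramSq m n).continuous_eval.aestronglyMeasurable (by fun_prop)
  rw [hmap, covariance_sum_sq_traceGramSq] at h
  rw [h]
  congr 1
  · exact funext fun ω => trace_transpose_mul_self_of_curry (Function.uncurry (A ω))
  · exact funext fun ω => trace_transpose_mul_self_sq_of_curry (Function.uncurry (A ω))

theorem covariance_trace_trace_sq_asymptotic_general
    (Ω : ℕ → Type*) [∀ n, MeasurableSpace (Ω n)]
    (μ : ∀ n, Measure (Ω n))
    (p q : ℕ → ℕ) (hq0 : ∀ n, 0 < q n)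
    (hp : Tendsto (fun n => (p n : ℝ)) atTop atTop)
    (X : ∀ n, Ω n → Fin (p n) → Fin (q n) → ℝ)
    (hX : ∀ n, Measure.map (X n) (μ n) =
      Measure.pi fun _ : Fin (p n) => Measure.pi fun _ : Fin (q n) => gaussianReal 0 1) :
    Tendsto
      (fun n =>
        rvCov (fun ω => Matrix.trace ((Matrix.of (X n ω))ᵀ * Matrix.of (X n ω)))
            (fun ω => Matrix.trace (((Matrix.of (X n ω))ᵀ * Matrix.of (X n ω)) ^ 2)) (μ n) /
          (4 * (p n : ℝ) * (q n : ℝ) * ((p n : ℝ) + (q n : ℝ))))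
      atTop (nhds 1) := by
  have hcov (n : ℕ) :
      rvCov (fun ω => Matrix.trace ((Matrix.of (X n ω))ᵀ * Matrix.of (X n ω)))
          (fun ω => Matrix.trace (((Matrix.of (X n ω))ᵀ * Matrix.of (X n ω)) ^ 2)) (μ n) =
        4 * p n * q n * (p n + q n + 1) := by
    rw [rvCov_eq_covariance]
    simpa using covariance_trace_transpose_mul_self_of_map_eq_gaussian (hX n)
  have hpq : Tendsto (fun n => (p n : ℝ) + q n) atTop atTop :=
    tendsto_atTop_mono (fun n => le_add_of_nonneg_right (Nat.cast_nonneg _)) hp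
  have hlim : Tendsto (fun n => 1 + ((p n : ℝ) + q n)⁻¹) atTop (nhds 1) := by
    simpa using tendsto_const_nhds.add hpq.inv_tendsto_atTop
  refine hlim.congr' ?_
  filter_upwards [hp.eventually_gt_atTop 0] with n hpn
  have hqn : (0 : ℝ) < q n := by exact_mod_cast hq0 n
  rw [hcov]
  field_simp

/-- **(ii) of Lemma 2.4 (Jiang).**  Let `ε ∈ (0,1)`, let `pₙ, qₙ` be positive integers
with `ε ≤ pₙ/qₙ ≤ ε⁻¹` for all `n` and `pₙ → ∞`, and let `Xₙ` be a `pₙ × qₙ` random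
matrix with i.i.d. standard normal entries.  Then
`Cov(tr(XₙᵀXₙ), tr((XₙᵀXₙ)²)) ~ 4 pₙ qₙ (pₙ + qₙ)` as `n → ∞`. -/
theorem covariance_trace_trace_sq_asymptotic
    (ε : ℝ) (hε0 : 0 < ε) (hε1 : ε < 1)
    (Ω : ℕ → Type*) [∀ n, MeasurableSpace (Ω n)]
    (μ : ∀ n, Measure (Ω n)) (hμ : ∀ n, IsProbabilityMeasure (μ n))
    (p q : ℕ → ℕ) (hp0 : ∀ n, 0 < p n) (hq0 : ∀ n, 0 < q n)
    (hratio : ∀ n, ε ≤ (p n : ℝ) / (q n : ℝ) ∧ (p n : ℝ) / (q n : ℝ) ≤ ε⁻¹)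
    (hp : Tendsto (fun n => (p n : ℝ)) atTop atTop)
    (X : ∀ n, Ω n → Fin (p n) → Fin (q n) → ℝ)
    (hX : ∀ n, Measure.map (X n) (μ n) =
      Measure.pi fun _ : Fin (p n) => Measure.pi fun _ : Fin (q n) => gaussianReal 0 1) :
    Tendsto
      (fun n =>
        rvCov (fun ω => Matrix.trace ((Matrix.of (X n ω))ᵀ * Matrix.of (X n ω)))
            (fun ω => Matrix.trace (((Matrix.of (X n ω))ᵀ * Matrix.of (X n ω)) ^ 2)) (μ n) /
          (4 * (p n : ℝ) * (q n : ℝ) * ((p n : ℝ) + (q n : ℝ))))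
      atTop (nhds 1) :=
  covariance_trace_trace_sq_asymptotic_general Ω μ p q hq0 hp X hX
end

section
/- Let {ξ_i : i ≥ 1} be a sequence of i.i.d. standard normal random variables and set S_k = Σ_{i=1}^{k} ξ_i². Then for any positive integers m and n and any x > 0 satisfying m ≤ n/2 and x ≤ n/m, P( |S_n/S_m − n/m| ≥ x ) ≤ 6·exp( −m⁴x²/(48·n³) ). -/
/-!
By Chernoff's bound with the moment generating function `(1 - 2t)^{-1/2}` of `ξ²`, and the
elementary inequality `log (1 + s) ≤ s - s²/4` for `s ≤ 1`, the chi-square variable `S_k` satisfies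
`P(|S_k - k| ≥ kε) ≤ 2 exp(-kε²/8)` for `0 ≤ ε < 1`. If `|Sₙ - n| < nε` and `|Sₘ - m| < mδ` with
`ε = 5xm/(24n)` and `δ = 7xm/(24n)`, then `|Sₙ/Sₘ - n/m| < x`; since `n ≥ 2m`, both exponents
`nε²/8` and `mδ²/8` are at least `m⁴x²/(48n³)`.
-/

open MeasureTheory ProbabilityTheory Real Finset

lemma one_add_le_exp_sub_sq_div_four {s : ℝ} (hs : s ≤ 1) : 1 + s ≤ exp (s - s ^ 2 / 4) := by
  rcases le_total 0 s with hs0 | hs0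
  · have hy : 0 ≤ s - s ^ 2 / 4 := by nlinarith
    nlinarith [quadratic_le_exp_of_nonneg hy]
  rcases le_total s (-1) with hs1 | hs1
  · linarith [exp_pos (s - s ^ 2 / 4)]
  -- on `[-1, 0]` the square of `1 + y / 2 ≤ exp (y / 2)` is sharper than `1 + y ≤ exp y`
  have hhalf := add_one_le_exp ((s - s ^ 2 / 4) / 2)
  have hsq : exp (s - s ^ 2 / 4) = exp ((s - s ^ 2 / 4) / 2) ^ 2 := by
    rw [← exp_nat_mul]; ring_nf
  rw [hsq]
  nlinarith [pow_le_pow_left₀ (by nlinarith : 0 ≤ (s - s ^ 2 / 4) / 2 + 1) hhalf 2]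

lemma integral_exp_mul_sq_gaussianReal {t : ℝ} (ht : t < 1 / 2) :
    ∫ y, exp (t * y ^ 2) ∂gaussianReal 0 1 = (√(1 - 2 * t))⁻¹ := by
  have hpdf : ∀ y, gaussianPDFReal 0 1 y • exp (t * y ^ 2)
      = (√(2 * π))⁻¹ * exp (-(1 / 2 - t) * y ^ 2) := fun y => by
    rw [gaussianPDFReal, smul_eq_mul, mul_assoc, ← exp_add]
    congr 2 <;> simp only [NNReal.coe_one, mul_one, sub_zero]
    ring
  simp_rw [integral_gaussianReal_eq_integral_smul one_ne_zero, hpdf, integral_const_mul,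
    integral_gaussian, show π / (1 / 2 - t) = 2 * π / (1 - 2 * t) by field_simp,
    sqrt_div' _ (by linarith : 0 ≤ 1 - 2 * t)]
  have : 0 < √(2 * π) := by positivity
  field_simp

-- The Chernoff bound for `k` degrees of freedom at the optimal parameter `t = r / (2 (1 + r))`,
-- for which `1 - 2t = (1 + r)⁻¹`.
lemma exp_neg_mul_inv_sqrt_pow_le {r : ℝ} (hr0 : -1 < r) (hr1 : r ≤ 1) (k : ℕ) :
    exp (-(r / (2 * (1 + r))) * (k * (1 + r))) * (√(1 - 2 * (r / (2 * (1 + r)))))⁻¹ ^ k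
      ≤ exp (-(k * r ^ 2 / 8)) := by
  have hr : 0 < 1 + r := by linarith
  have hlin : -(r / (2 * (1 + r))) * (k * (1 + r)) = k * (-r / 2) := by field_simp
  have hvar : 1 - 2 * (r / (2 * (1 + r))) = (1 + r)⁻¹ := by field_simp; ring
  have hquad : -(k * r ^ 2 / 8) = k * (-(r ^ 2 / 8)) := by ring
  rw [hlin, hvar, hquad, sqrt_inv, inv_inv, exp_nat_mul, exp_nat_mul, ← mul_pow]
  refine pow_le_pow_left₀ (by positivity) ?_ k
  rw [← pow_le_pow_iff_left₀ (by positivity) (by positivity) two_ne_zero, mul_pow,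
    sq_sqrt hr.le, ← exp_nat_mul, ← exp_nat_mul]
  calc exp (2 * (-r / 2)) * (1 + r) ≤ exp (-r) * exp (r - r ^ 2 / 4) := by
        rw [show 2 * (-r / 2) = -r by ring]
        exact mul_le_mul_of_nonneg_left (one_add_le_exp_sub_sq_div_four hr1) (exp_pos _).le
    _ = exp (2 * -(r ^ 2 / 8)) := by rw [← exp_add]; ring_nf

lemma abs_div_sub_div_lt {a b p q ε δ x : ℝ} (hp : 0 < p) (hq : 0 < q)
    (ha : |a - p| < p * ε) (hb : |b - q| < q * δ) (hδ : δ < 1)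
    (h : p * (ε + δ) ≤ x * q * (1 - δ)) : |a / b - p / q| < x := by
  have hbq : q * (1 - δ) < b := by linarith [neg_abs_le (b - q)]
  have hq' : 0 < q * (1 - δ) := mul_pos hq (sub_pos.2 hδ)
  have hb0 : 0 < b := hq'.trans hbq
  have hx : 0 < x := by
    have : 0 < p * (ε + δ) := by nlinarith [abs_nonneg (a - p), abs_nonneg (b - q)]
    nlinarith
  rw [div_sub_div _ _ hb0.ne' hq.ne', abs_div, abs_of_pos (mul_pos hb0 hq),
    div_lt_iff₀ (mul_pos hb0 hq)]
  calc |a * q - b * p| = |q * (a - p) - p * (b - q)| := by congr 1; ring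
    _ ≤ q * |a - p| + p * |b - q| := (abs_sub _ _).trans_eq <| by
        rw [abs_mul, abs_mul, abs_of_pos hq, abs_of_pos hp]
    _ < q * (p * ε) + p * (q * δ) := by gcongr
    _ = q * (p * (ε + δ)) := by ring
    _ ≤ q * (x * q * (1 - δ)) := by gcongr
    _ < x * (b * q) := by nlinarith [mul_pos hx hq]

section ChiSquare

variable {Ω ι : Type*} [MeasurableSpace Ω] {μ : Measure Ω}

lemma mgf_sq_of_map_eq_gaussianReal {X : Ω → ℝ} (hX : μ.map X = gaussianReal 0 1) {t : ℝ}
    (ht : t < 1 / 2) : mgf (fun ω => X ω ^ 2) μ t = (√(1 - 2 * t))⁻¹ := by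
  have hXm : AEMeasurable X μ := aemeasurable_of_map_neZero (by rw [hX]; infer_instance)
  rw [mgf, ← integral_exp_mul_sq_gaussianReal ht, ← hX,
    integral_map hXm (by fun_prop)]

variable {ξ : ι → Ω → ℝ}

lemma mgf_sum_sq_of_iIndepFun (hindep : iIndepFun ξ μ)
    (hgauss : ∀ i, μ.map (ξ i) = gaussianReal 0 1) (s : Finset ι) {t : ℝ} (ht : t < 1 / 2) :
    mgf (fun ω => ∑ i ∈ s, ξ i ω ^ 2) μ t = (√(1 - 2 * t))⁻¹ ^ #s := by
  have hsq : iIndepFun (fun i ω => ξ i ω ^ 2) μ :=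
    hindep.comp (fun _ y => y ^ 2) fun _ => by fun_prop
  have hmeas : ∀ i, AEMeasurable (fun ω => ξ i ω ^ 2) μ := fun i =>
    (aemeasurable_of_map_neZero (by rw [hgauss i]; infer_instance)).pow_const 2
  rw [← prod_const, ← prod_congr rfl fun i _ => mgf_sq_of_map_eq_gaussianReal (hgauss i) ht,
    ← hsq.mgf_sum₀ hmeas s]
  congr with ω
  simp only [Finset.sum_apply]

lemma integrable_exp_mul_sum_sq [IsProbabilityMeasure μ] (hindep : iIndepFun ξ μ)
    (hgauss : ∀ i, μ.map (ξ i) = gaussianReal 0 1) (s : Finset ι) {t : ℝ} (ht : t < 1 / 2) :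
    Integrable (fun ω => exp (t * ∑ i ∈ s, ξ i ω ^ 2)) μ := by
  rw [← mgf_pos_iff, mgf_sum_sq_of_iIndepFun hindep hgauss s ht]
  have : 0 < 1 - 2 * t := by linarith
  positivity

lemma measureReal_sum_sq_ge_le [IsProbabilityMeasure μ] (hindep : iIndepFun ξ μ)
    (hgauss : ∀ i, μ.map (ξ i) = gaussianReal 0 1) (s : Finset ι) {r : ℝ} (hr0 : 0 ≤ r)
    (hr1 : r ≤ 1) :
    μ.real {ω | #s * (1 + r) ≤ ∑ i ∈ s, ξ i ω ^ 2} ≤ exp (-(#s * r ^ 2 / 8)) := by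
  have ht : r / (2 * (1 + r)) < 1 / 2 := by rw [div_lt_iff₀ (by positivity)]; linarith
  calc _ ≤ _ := measure_ge_le_exp_mul_mgf _ (by positivity)
        (integrable_exp_mul_sum_sq hindep hgauss s ht)
    _ ≤ _ := by
      rw [mgf_sum_sq_of_iIndepFun hindep hgauss s ht]
      exact exp_neg_mul_inv_sqrt_pow_le (by linarith) hr1 _

lemma measureReal_sum_sq_le_le [IsProbabilityMeasure μ] (hindep : iIndepFun ξ μ)
    (hgauss : ∀ i, μ.map (ξ i) = gaussianReal 0 1) (s : Finset ι) {r : ℝ} (hr0 : -1 < r)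
    (hr1 : r ≤ 0) :
    μ.real {ω | ∑ i ∈ s, ξ i ω ^ 2 ≤ #s * (1 + r)} ≤ exp (-(#s * r ^ 2 / 8)) := by
  have hr : 0 < 1 + r := by linarith
  have ht : r / (2 * (1 + r)) < 1 / 2 := by rw [div_lt_iff₀ (by positivity)]; linarith
  calc _ ≤ _ := measure_le_le_exp_mul_mgf _ (div_nonpos_of_nonpos_of_nonneg hr1 (by positivity))
        (integrable_exp_mul_sum_sq hindep hgauss s ht)
    _ ≤ _ := by
      rw [mgf_sum_sq_of_iIndepFun hindep hgauss s ht]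
      exact exp_neg_mul_inv_sqrt_pow_le hr0 (by linarith) _

lemma measureReal_abs_sum_sq_sub_ge_le [IsProbabilityMeasure μ] (hindep : iIndepFun ξ μ)
    (hgauss : ∀ i, μ.map (ξ i) = gaussianReal 0 1) (s : Finset ι) {ε : ℝ} (hε0 : 0 ≤ ε)
    (hε1 : ε < 1) :
    μ.real {ω | #s * ε ≤ |∑ i ∈ s, ξ i ω ^ 2 - #s|} ≤ 2 * exp (-(#s * ε ^ 2 / 8)) := by
  have hsub : {ω | #s * ε ≤ |∑ i ∈ s, ξ i ω ^ 2 - #s|}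
      ⊆ {ω | #s * (1 + ε) ≤ ∑ i ∈ s, ξ i ω ^ 2} ∪ {ω | ∑ i ∈ s, ξ i ω ^ 2 ≤ #s * (1 + -ε)} := by
    intro ω (hω : (_ : ℝ) ≤ |_|)
    rcases le_abs'.1 hω with h | h
    · exact Or.inr (show (_ : ℝ) ≤ _ by linarith)
    · exact Or.inl (show (_ : ℝ) ≤ _ by linarith)
  calc _ ≤ _ := measureReal_mono hsub
    _ ≤ _ := measureReal_union_le _ _
    _ ≤ exp (-(#s * ε ^ 2 / 8)) + exp (-(#s * (-ε) ^ 2 / 8)) :=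
        add_le_add (measureReal_sum_sq_ge_le hindep hgauss s hε0 hε1.le)
          (measureReal_sum_sq_le_le hindep hgauss s (by linarith) (by linarith))
    _ = _ := by rw [neg_sq]; ring

end ChiSquare

/-- **Lemma 4.2 (Jiang).**  Let `ξ₁, ξ₂, …` be i.i.d. standard normal random variables
and `S_k = Σ_{i=1}^{k} ξᵢ²`.  Then for any positive integers `m ≤ n/2` and any real
`0 < x ≤ n/m`, `P(|Sₙ/Sₘ − n/m| ≥ x) ≤ 6·exp(−m⁴x²/(48n³))`. -/
theorem chi_square_ratio_tail_bound
    {Ω : Type*} [MeasurableSpace Ω] (μ : Measure Ω) [IsProbabilityMeasure μ]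
    (ξ : ℕ → Ω → ℝ)
    (hindep : iIndepFun ξ μ)
    (hgauss : ∀ i, Measure.map (ξ i) μ = gaussianReal 0 1)
    (m n : ℕ) (hm : 1 ≤ m) (hmn : 2 * m ≤ n)
    (x : ℝ) (hx : 0 < x) (hxnm : x ≤ (n : ℝ) / (m : ℝ)) :
    μ {ω | x ≤ |(∑ i ∈ Finset.range n, ξ i ω ^ 2) / (∑ i ∈ Finset.range m, ξ i ω ^ 2)
        - (n : ℝ) / (m : ℝ)|}
      ≤ ENNReal.ofReal (6 * Real.exp (-((m : ℝ) ^ 4 * x ^ 2) / (48 * (n : ℝ) ^ 3))) := by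
  have hm0 : (0 : ℝ) < m := by exact_mod_cast hm
  have hmn' : 2 * (m : ℝ) ≤ n := by exact_mod_cast hmn
  have hn0 : (0 : ℝ) < n := by linarith
  have hxm : x * m ≤ n := (le_div_iff₀ hm0).1 hxnm
  set T := -((m : ℝ) ^ 4 * x ^ 2) / (48 * (n : ℝ) ^ 3) with hT
  set ε := 5 * x * m / (24 * n) with hε
  set δ := 7 * x * m / (24 * n) with hδ
  have hδ1 : δ ≤ 1 / 2 := by rw [hδ, div_le_iff₀ (by positivity)]; linarith
  have hSn : μ.real {ω | n * ε ≤ |∑ i ∈ range n, ξ i ω ^ 2 - n|} ≤ 2 * exp T := by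
    have hε1 : ε < 1 := by rw [hε, div_lt_one (by positivity)]; linarith
    have h := measureReal_abs_sum_sq_sub_ge_le hindep hgauss (range n) (by positivity) hε1
    rw [card_range] at h
    refine h.trans ?_
    rw [mul_le_mul_iff_right₀ two_pos, exp_le_exp, hε, hT]
    field_simp
    nlinarith
  have hSm : μ.real {ω | m * δ ≤ |∑ i ∈ range m, ξ i ω ^ 2 - m|} ≤ 2 * exp T := by
    have h := measureReal_abs_sum_sq_sub_ge_le hindep hgauss (range m) (ε := δ) (by positivity)
      (by linarith)
    rw [card_range] at h
    refine h.trans ?_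
    rw [mul_le_mul_iff_right₀ two_pos, exp_le_exp, hδ, hT]
    field_simp
    linarith
  have hsub : {ω | x ≤ |(∑ i ∈ range n, ξ i ω ^ 2) / (∑ i ∈ range m, ξ i ω ^ 2) - n / m|}
      ⊆ {ω | n * ε ≤ |∑ i ∈ range n, ξ i ω ^ 2 - n|}
        ∪ {ω | m * δ ≤ |∑ i ∈ range m, ξ i ω ^ 2 - m|} := by
    intro ω (hω : x ≤ _)
    by_contra hω'
    simp only [Set.mem_union, Set.mem_ofPred_eq, not_or, not_le] at hω'
    refine (abs_div_sub_div_lt hn0 hm0 hω'.1 hω'.2 (by linarith) ?_).not_ge hω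
    rw [hε, hδ]
    field_simp
    linarith
  rw [ENNReal.le_ofReal_iff_toReal_le (measure_ne_top _ _) (by positivity), ← measureReal_def]
  calc _ ≤ _ := measureReal_mono hsub
    _ ≤ _ := measureReal_union_le _ _
    _ ≤ 6 * exp T := by linarith [exp_pos T]
end
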